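/- Let P : ℝ^{n} → ℝ^{n×n} be continuous with symmetric positive definite values, and suppose there are a positive non-increasing function p̲ and a non-decreasing function p̄ with p̲(|e|) I ≤ P(e) ≤ p̄(|e|) I for all e. Then the Riemannian distance to the origin satisfies √(p̲(|e|)) |e| ≤ d_P(e, 0) ≤ √(p̄(|e|)) |e| for all e in ℝ^{n}. -/

import Mathlib

open Real Set Filter
open scoped RealInnerProductSpace Topology

/-- Euclidean state space ℝⁿ. -/
abbrev Euc (n : ℕ) := EuclideanSpace ℝ (Fin n)

/-- Riemannian length (for the metric P) of the path s ↦ γ(s), s ∈ [0,1]. -/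
noncomputable def pathLength {n : ℕ} (P : Euc n → Euc n →L[ℝ] Euc n)
    (γ : ℝ → Euc n) : ℝ :=
  ∫ s in (0:ℝ)..1, Real.sqrt ⟪P (γ s) (deriv γ s), deriv γ s⟫

/-- Riemannian distance associated with the metric P: the infimum of the lengths
of C¹ paths joining the two points. -/
noncomputable def riemDist {n : ℕ} (P : Euc n → Euc n →L[ℝ] Euc n)
    (a b : Euc n) : ℝ :=
  sInf {L : ℝ | ∃ γ : ℝ → Euc n, ContDiff ℝ 1 γ ∧ γ 0 = a ∧ γ 1 = b ∧
    L = pathLength P γ}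

/-! The straight segment from `e` to `0` stays in the ball of radius `‖e‖`, where `P ≤ p̄(‖e‖) I`,
and has Euclidean length `‖e‖`; this gives the upper bound. For the lower bound, let `a` be the
last time at which a path from `e` to `0` has norm at least `‖e‖`. After time `a` the path stays
in that ball, where `P ≥ p̲(‖e‖) I`, while it still covers the Euclidean distance
`‖γ a‖ ≥ ‖e‖` to the origin. -/

section QuadraticFormBounds

variable {E : Type*} [NormedAddCommGroup E] [InnerProductSpace ℝ E] {P : E → E →L[ℝ] E}

theorem sqrt_mul_norm_le_sqrt_inner {pl : ℝ → ℝ} (hpl : AntitoneOn pl (Ici 0))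
    (hPlow : ∀ e v, pl ‖e‖ * ‖v‖ ^ 2 ≤ ⟪P e v, v⟫) {e : E} {r : ℝ} (her : ‖e‖ ≤ r) (v : E) :
    √(pl r) * ‖v‖ ≤ √⟪P e v, v⟫ :=
  calc √(pl r) * ‖v‖ = √(pl r * ‖v‖ ^ 2) := by
        rw [Real.sqrt_mul' _ (sq_nonneg _), Real.sqrt_sq (norm_nonneg v)]
    _ ≤ √⟪P e v, v⟫ := Real.sqrt_le_sqrt <|
        (mul_le_mul_of_nonneg_right (hpl (norm_nonneg e) ((norm_nonneg e).trans her) her)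
          (sq_nonneg _)).trans (hPlow e v)

theorem sqrt_inner_le_sqrt_mul_norm {pu : ℝ → ℝ} (hpu : MonotoneOn pu (Ici 0))
    (hPup : ∀ e v, ⟪P e v, v⟫ ≤ pu ‖e‖ * ‖v‖ ^ 2) {e : E} {r : ℝ} (her : ‖e‖ ≤ r) (v : E) :
    √⟪P e v, v⟫ ≤ √(pu r) * ‖v‖ :=
  calc √⟪P e v, v⟫ ≤ √(pu r * ‖v‖ ^ 2) := Real.sqrt_le_sqrt <| (hPup e v).trans <|
        mul_le_mul_of_nonneg_right (hpu (norm_nonneg e) ((norm_nonneg e).trans her) her)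
          (sq_nonneg _)
    _ = √(pu r) * ‖v‖ := by rw [Real.sqrt_mul' _ (sq_nonneg _), Real.sqrt_sq (norm_nonneg v)]

end QuadraticFormBounds

theorem ContinuousOn.exists_last_time_ge {u : ℝ → ℝ} {x y c : ℝ} (hu : ContinuousOn u (Icc x y))
    (hxy : x ≤ y) (hx : c ≤ u x) : ∃ a ∈ Icc x y, c ≤ u a ∧ ∀ t ∈ Ioc a y, u t < c := by
  have hclosed : IsClosed (Icc x y ∩ u ⁻¹' Ici c) :=
    hu.preimage_isClosed_of_isClosed isClosed_Icc isClosed_Ici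
  obtain ⟨a, ⟨ha, hca⟩, hmax⟩ := (isCompact_Icc.of_isClosed_subset hclosed
    inter_subset_left).exists_isGreatest ⟨x, left_mem_Icc.2 hxy, hx⟩
  exact ⟨a, ha, hca, fun t ht => not_le.1 fun hct =>
    ht.1.not_ge (hmax ⟨⟨ha.1.trans ht.1.le, ht.2⟩, hct⟩)⟩

section PathLength

variable {n : ℕ} {P : Euc n → Euc n →L[ℝ] Euc n}

theorem pathLength_nonneg (γ : ℝ → Euc n) : 0 ≤ pathLength P γ :=
  intervalIntegral.integral_nonneg zero_le_one fun _ _ => Real.sqrt_nonneg _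

theorem continuous_sqrt_inner_deriv (hP : Continuous P) {γ : ℝ → Euc n}
    (hγ : ContDiff ℝ 1 γ) : Continuous fun t => √⟪P (γ t) (deriv γ t), deriv γ t⟫ := by
  have hγ' := hγ.continuous_deriv_one
  exact (((hP.comp hγ.continuous).clm_apply hγ').inner hγ').sqrt

theorem riemDist_le_pathLength {a b : Euc n} {γ : ℝ → Euc n} (hγ : ContDiff ℝ 1 γ)
    (h0 : γ 0 = a) (h1 : γ 1 = b) : riemDist P a b ≤ pathLength P γ :=
  csInf_le ⟨0, by rintro _ ⟨γ, -, -, -, rfl⟩; exact pathLength_nonneg γ⟩ ⟨γ, hγ, h0, h1, rfl⟩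

theorem le_riemDist {a b : Euc n} {c : ℝ}
    (h : ∀ γ : ℝ → Euc n, ContDiff ℝ 1 γ → γ 0 = a → γ 1 = b → c ≤ pathLength P γ) :
    c ≤ riemDist P a b :=
  le_csInf ⟨_, fun s => a + s • (b - a), by fun_prop, by simp, by simp, rfl⟩
    (by rintro _ ⟨γ, hγ, h0, h1, rfl⟩; exact h γ hγ h0 h1)

theorem sqrt_mul_norm_sub_le_pathLength (hP : Continuous P) {pl : ℝ → ℝ}
    (hpl : AntitoneOn pl (Ici 0)) (hPlow : ∀ e v, pl ‖e‖ * ‖v‖ ^ 2 ≤ ⟪P e v, v⟫)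
    {γ : ℝ → Euc n} (hγ : ContDiff ℝ 1 γ) {a r : ℝ} (ha : a ∈ Icc (0 : ℝ) 1)
    (hr : ∀ t ∈ Ioo a 1, ‖γ t‖ ≤ r) : √(pl r) * ‖γ 1 - γ a‖ ≤ pathLength P γ := by
  have hf := continuous_sqrt_inner_deriv hP hγ
  have hγ' := hγ.continuous_deriv_one
  calc √(pl r) * ‖γ 1 - γ a‖ ≤ √(pl r) * ∫ t in a..1, ‖deriv γ t‖ := by
        gcongr
        exact norm_sub_le_integral_of_norm_deriv_le_of_le ha.2 hγ.continuous.continuousOn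
          (hγ.differentiable one_ne_zero).differentiableOn
          (MeasureTheory.ae_of_all _ fun _ _ => le_rfl)
          (hγ'.norm.intervalIntegrable _ _)
    _ = ∫ t in a..1, √(pl r) * ‖deriv γ t‖ := (intervalIntegral.integral_const_mul _ _).symm
    _ ≤ ∫ t in a..1, √⟪P (γ t) (deriv γ t), deriv γ t⟫ :=
        intervalIntegral.integral_mono_on_of_le_Ioo ha.2
          ((continuous_const.mul hγ'.norm).intervalIntegrable _ _) (hf.intervalIntegrable _ _)
          fun t ht => sqrt_mul_norm_le_sqrt_inner hpl hPlow (hr t ht) _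
    _ ≤ pathLength P γ := by
        rw [pathLength, ← intervalIntegral.integral_add_adjacent_intervals
          (hf.intervalIntegrable 0 a) (hf.intervalIntegrable a 1)]
        exact le_add_of_nonneg_left
          (intervalIntegral.integral_nonneg ha.1 fun _ _ => Real.sqrt_nonneg _)

theorem sqrt_mul_norm_le_pathLength (hP : Continuous P) {pl : ℝ → ℝ}
    (hpl : AntitoneOn pl (Ici 0)) (hPlow : ∀ e v, pl ‖e‖ * ‖v‖ ^ 2 ≤ ⟪P e v, v⟫)
    {γ : ℝ → Euc n} (hγ : ContDiff ℝ 1 γ) (h1 : γ 1 = 0) :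
    √(pl ‖γ 0‖) * ‖γ 0‖ ≤ pathLength P γ := by
  obtain ⟨a, ha, hγa, hlast⟩ := hγ.continuous.norm.continuousOn.exists_last_time_ge
    zero_le_one le_rfl
  calc √(pl ‖γ 0‖) * ‖γ 0‖ ≤ √(pl ‖γ 0‖) * ‖γ 1 - γ a‖ := by
        rw [h1, zero_sub, norm_neg]; gcongr
    _ ≤ pathLength P γ := sqrt_mul_norm_sub_le_pathLength hP hpl hPlow hγ ha
        fun t ht => (hlast t (Ioo_subset_Ioc_self ht)).le

theorem pathLength_segment_to_zero_le (hP : Continuous P) {pu : ℝ → ℝ}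
    (hpu : MonotoneOn pu (Ici 0)) (hPup : ∀ e v, ⟪P e v, v⟫ ≤ pu ‖e‖ * ‖v‖ ^ 2) (e : Euc n) :
    pathLength P (fun s => (1 - s) • e) ≤ √(pu ‖e‖) * ‖e‖ := by
  have hderiv (s : ℝ) : deriv (fun s : ℝ => (1 - s) • e) s = -e := by
    simpa using (((hasDerivAt_id s).const_sub 1).smul_const e).deriv
  have hbound (s : ℝ) (hs : s ∈ Icc (0 : ℝ) 1) : ‖(1 - s) • e‖ ≤ ‖e‖ := by
    rw [norm_smul]
    exact mul_le_of_le_one_left (norm_nonneg e)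
      (abs_le.2 ⟨by linarith [hs.2], by linarith [hs.1]⟩)
  calc pathLength P (fun s => (1 - s) • e) ≤ ∫ _ in (0 : ℝ)..1, √(pu ‖e‖) * ‖e‖ :=
        intervalIntegral.integral_mono_on zero_le_one
          ((continuous_sqrt_inner_deriv hP (by fun_prop)).intervalIntegrable _ _)
          intervalIntegrable_const fun s hs => by
            simpa only [hderiv, norm_neg] using
              sqrt_inner_le_sqrt_mul_norm hpu hPup (hbound s hs) (-e)
    _ = √(pu ‖e‖) * ‖e‖ := by simp

end PathLength

theorem riemannian_distance_to_origin_bounds_general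
    {n : ℕ}
    (P : Euc n → Euc n →L[ℝ] Euc n) (hP : Continuous P)
    (pl pu : ℝ → ℝ)
    (hpl : AntitoneOn pl (Ici 0)) (hpu : MonotoneOn pu (Ici 0))
    (hPbnd : ∀ e v : Euc n,
      pl ‖e‖ * ‖v‖ ^ 2 ≤ ⟪P e v, v⟫ ∧ ⟪P e v, v⟫ ≤ pu ‖e‖ * ‖v‖ ^ 2) :
    ∀ e : Euc n,
      Real.sqrt (pl ‖e‖) * ‖e‖ ≤ riemDist P e 0 ∧
      riemDist P e 0 ≤ Real.sqrt (pu ‖e‖) * ‖e‖ := by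
  intro e
  constructor
  · refine le_riemDist fun γ hγ h0 h1 => ?_
    exact h0 ▸ sqrt_mul_norm_le_pathLength hP hpl (fun e v => (hPbnd e v).1) hγ h1
  · calc riemDist P e 0 ≤ pathLength P (fun s => (1 - s) • e) :=
          riemDist_le_pathLength (by fun_prop) (by simp) (by simp)
      _ ≤ √(pu ‖e‖) * ‖e‖ :=
          pathLength_segment_to_zero_le hP hpu (fun e v => (hPbnd e v).2) e

/-- If P is a continuous symmetric positive definite metric with
p̲(|e|) I ≤ P(e) ≤ p̄(|e|) I, p̲ positive non-increasing and p̄ non-decreasing,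
then √(p̲(|e|)) |e| ≤ d_P(e,0) ≤ √(p̄(|e|)) |e|. -/
theorem riemannian_distance_to_origin_bounds
    {n : ℕ}
    (P : Euc n → Euc n →L[ℝ] Euc n) (hP : Continuous P)
    (hPsa : ∀ e, IsSelfAdjoint (P e))
    (hPpos : ∀ (e v : Euc n), v ≠ 0 → 0 < ⟪P e v, v⟫)
    (pl pu : ℝ → ℝ)
    (hplpos : ∀ s, 0 ≤ s → 0 < pl s)
    (hpl : AntitoneOn pl (Ici 0)) (hpu : MonotoneOn pu (Ici 0))
    (hPbnd : ∀ e v : Euc n,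
      pl ‖e‖ * ‖v‖ ^ 2 ≤ ⟪P e v, v⟫ ∧ ⟪P e v, v⟫ ≤ pu ‖e‖ * ‖v‖ ^ 2) :
    ∀ e : Euc n,
      Real.sqrt (pl ‖e‖) * ‖e‖ ≤ riemDist P e 0 ∧
      riemDist P e 0 ≤ Real.sqrt (pu ‖e‖) * ‖e‖ :=
  riemannian_distance_to_origin_bounds_general P hP pl pu hpl hpu hPbnd
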